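/- arXiv:1511.06949 — 2 statements merged into one kernel-verified Lean document; each statement's English description precedes it below -/
import Mathlib

section
/- Let f(z) = z + a_2 z² + a_3 z³ + ⋯ be holomorphic on D with f' nonvanishing, f(z) ≠ 0 for z ≠ 0, and Re(f(z)/(z f'(z))) ≥ 0 for all z ∈ D ∖ {0} (f is starlike). Then |2a_3 - a_2²| ≤ 2. -/
/-!
Put `p z = z f'(z) / f(z)`, so that `p 0 = 1`, `Re p ≥ 0` and `z f' = p f`. Comparing Taylor
coefficients in `z f' = p f` gives `2 a₃ - a₂² = c₂`, the second Taylor coefficient of `p`, and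
`|c₂| ≤ 2` is Carathéodory's bound. To prove it, pass to the even part `q` of `p`, which has the
same `c₂` and no linear term: the Cayley transform `ω = (q - 1) / (q + 1)` maps the disc into the
closed disc and vanishes to second order at `0`, with `c₂ = 2 c₂(ω)`, and Schwarz's lemma applied
to `ω z / z` gives `|c₂(ω)| ≤ 1`.
-/

open Complex Metric Finset

noncomputable def taylorCoeff {𝕜 : Type*} [NontriviallyNormedField 𝕜] (f : 𝕜 → 𝕜) (n : ℕ) : 𝕜 :=
  iteratedDeriv n f 0 / n.factorial

section TaylorCoeff

variable {𝕜 : Type*} [NontriviallyNormedField 𝕜] {f g : 𝕜 → 𝕜} {n : ℕ}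

@[simp]
theorem taylorCoeff_zero : taylorCoeff f 0 = f 0 := by
  simp [taylorCoeff]

@[simp]
theorem taylorCoeff_one : taylorCoeff f 1 = deriv f 0 := by
  simp [taylorCoeff]

theorem Filter.EventuallyEq.taylorCoeff_eq (h : f =ᶠ[nhds 0] g) (n : ℕ) :
    taylorCoeff f n = taylorCoeff g n := by
  rw [taylorCoeff, taylorCoeff, h.iteratedDeriv_eq]

theorem taylorCoeff_add_const (c : 𝕜) (n : ℕ) :
    taylorCoeff (fun z => f z + c) (n + 1) = taylorCoeff f (n + 1) := by
  simp only [taylorCoeff, add_comm _ c, iteratedDeriv_const_add n.succ_pos]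

theorem taylorCoeff_even_part (hf : ContDiffAt 𝕜 n f 0) :
    taylorCoeff (fun z => (f z + f (-z)) / 2) n = (1 + (-1) ^ n) / 2 * taylorCoeff f n := by
  have hneg : ContDiffAt 𝕜 n (fun z => f (-z)) 0 :=
    ContDiffAt.comp (f := Neg.neg) 0 (by rwa [neg_zero]) contDiffAt_id.neg
  rw [taylorCoeff, taylorCoeff, iteratedDeriv_div_const, iteratedDeriv_fun_add hf hneg,
    iteratedDeriv_comp_neg, neg_zero, smul_eq_mul]
  ring

variable [CharZero 𝕜]

theorem taylorCoeff_deriv (n : ℕ) :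
    taylorCoeff (deriv f) n = (n + 1) * taylorCoeff f (n + 1) := by
  rw [taylorCoeff, taylorCoeff, ← iteratedDeriv_succ', Nat.factorial_succ, Nat.cast_mul]
  field_simp
  push_cast
  ring

theorem taylorCoeff_mul (hf : ContDiffAt 𝕜 n f 0) (hg : ContDiffAt 𝕜 n g 0) :
    taylorCoeff (f * g) n =
      ∑ i ∈ range (n + 1), taylorCoeff f i * taylorCoeff g (n - i) := by
  rw [taylorCoeff, iteratedDeriv_mul hf hg, sum_div]
  refine sum_congr rfl fun i hi => ?_
  have hin : i ≤ n := Nat.lt_succ_iff.mp (mem_range.mp hi)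
  have hchoose : (n.choose i : 𝕜) ≠ 0 := Nat.cast_ne_zero.mpr (Nat.choose_pos hin).ne'
  rw [taylorCoeff, taylorCoeff, ← Nat.choose_mul_factorial_mul_factorial hin]
  push_cast
  field_simp

theorem taylorCoeff_id_mul (hf : ContDiffAt 𝕜 (n + 1) f 0) :
    taylorCoeff (fun z => z * f z) (n + 1) = taylorCoeff f n := by
  rw [show (fun z => z * f z) = id * f from rfl, taylorCoeff_mul contDiffAt_id hf,
    sum_range_succ', sum_range_succ']
  simp [taylorCoeff, iteratedDeriv_id]

end TaylorCoeff

theorem Complex.norm_sub_one_le_norm_add_one {w : ℂ} (hw : 0 ≤ w.re) : ‖w - 1‖ ≤ ‖w + 1‖ := by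
  rw [← sq_le_sq₀ (norm_nonneg _) (norm_nonneg _), Complex.sq_norm, Complex.sq_norm,
    normSq_apply, normSq_apply]
  simp only [sub_re, add_re, sub_im, add_im, one_re, one_im]
  nlinarith

theorem Complex.add_one_ne_zero_of_re_nonneg {w : ℂ} (hw : 0 ≤ w.re) : w + 1 ≠ 0 := by
  intro h
  have := congrArg re h
  simp only [add_re, one_re, zero_re] at this
  linarith

theorem norm_taylorCoeff_two_le_one_of_mapsTo_ball {ω : ℂ → ℂ}
    (hd : DifferentiableOn ℂ ω (ball 0 1))
    (hmaps : Set.MapsTo ω (ball 0 1) (closedBall 0 1)) (h0 : ω 0 = 0) (h0' : deriv ω 0 = 0) :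
    ‖taylorCoeff ω 2‖ ≤ 1 := by
  set h := dslope ω 0
  have hB : ball (0 : ℂ) 1 ∈ nhds 0 := ball_mem_nhds 0 one_pos
  have hd' : DifferentiableOn ℂ h (ball 0 1) := (differentiableOn_dslope hB).mpr hd
  have hh0 : h 0 = 0 := by simp [h, h0']
  have hmaps' : Set.MapsTo h (ball 0 1) (closedBall (h 0) 1) := fun z hz => by
    rw [hh0, mem_closedBall_zero_iff]
    simpa using norm_dslope_le_div_of_mapsTo_ball hd (by rwa [h0]) hz
  have hω : ω = fun z => z * h z :=
    funext fun z => by simpa [h0] using (sub_smul_dslope ω 0 z).symm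
  rw [hω, taylorCoeff_id_mul (hd'.analyticAt hB).contDiffAt, taylorCoeff_one]
  exact norm_deriv_le_one_of_mapsTo_ball hd' hmaps' one_pos

theorem norm_taylorCoeff_two_le_two_of_re_nonneg_of_deriv_eq_zero {q : ℂ → ℂ}
    (hd : DifferentiableOn ℂ q (ball 0 1)) (h0 : q 0 = 1) (hre : ∀ z ∈ ball 0 1, 0 ≤ (q z).re)
    (h0' : deriv q 0 = 0) : ‖taylorCoeff q 2‖ ≤ 2 := by
  have hB : ball (0 : ℂ) 1 ∈ nhds 0 := ball_mem_nhds 0 one_pos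
  have hne : ∀ z ∈ ball 0 1, q z + 1 ≠ 0 := fun z hz => add_one_ne_zero_of_re_nonneg (hre z hz)
  set ω := fun z => (q z - 1) / (q z + 1)
  have hωd : DifferentiableOn ℂ ω (ball 0 1) := (hd.sub_const 1).div (hd.add_const 1) hne
  have hω0 : ω 0 = 0 := by simp [ω, h0]
  have hmaps : Set.MapsTo ω (ball 0 1) (closedBall 0 1) := fun z hz => by
    rw [mem_closedBall_zero_iff, norm_div]
    exact div_le_one_of_le₀ (norm_sub_one_le_norm_add_one (hre z hz)) (norm_nonneg _)
  have hq : (fun z => ((fun z => q z + 1) * ω) z + 1) =ᶠ[nhds 0] q := by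
    filter_upwards [hB] with z hz
    simp only [Pi.mul_apply, ω]
    field_simp [hne z hz]
    ring
  have hcoeff (n : ℕ) : taylorCoeff q (n + 1) = ∑ i ∈ range (n + 2),
      taylorCoeff (fun z => q z + 1) i * taylorCoeff ω (n + 1 - i) := by
    rw [← hq.taylorCoeff_eq, taylorCoeff_add_const,
      taylorCoeff_mul ((hd.add_const 1).analyticAt hB).contDiffAt (hωd.analyticAt hB).contDiffAt]
  have hω1 : deriv ω 0 = 0 := by
    simpa [sum_range_succ, h0, hω0, h0'] using (hcoeff 0).symm
  have hω2 : taylorCoeff q 2 = 2 * taylorCoeff ω 2 := by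
    simpa [sum_range_succ, h0, hω0, hω1, one_add_one_eq_two] using hcoeff 1
  rw [hω2, norm_mul, Complex.norm_ofNat]
  linarith [norm_taylorCoeff_two_le_one_of_mapsTo_ball hωd hmaps hω0 hω1]

theorem norm_taylorCoeff_two_le_two_of_re_nonneg {p : ℂ → ℂ}
    (hd : DifferentiableOn ℂ p (ball 0 1)) (h0 : p 0 = 1) (hre : ∀ z ∈ ball 0 1, 0 ≤ (p z).re) :
    ‖taylorCoeff p 2‖ ≤ 2 := by
  have hB : ball (0 : ℂ) 1 ∈ nhds 0 := ball_mem_nhds 0 one_pos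
  have hneg : DifferentiableOn ℂ (fun z => p (-z)) (ball 0 1) :=
    hd.comp (differentiableOn_neg _) fun z hz => by simpa using hz
  have hq := norm_taylorCoeff_two_le_two_of_re_nonneg_of_deriv_eq_zero
    (q := fun z => (p z + p (-z)) / 2) ((hd.add hneg).div_const 2) (by simp [h0])
    (fun z hz => ?_) ?_
  · simpa [taylorCoeff_even_part (hd.analyticAt hB).contDiffAt] using hq
  · rw [div_ofNat_re, add_re]
    exact div_nonneg (add_nonneg (hre z hz) (hre (-z) (by simpa using hz))) zero_le_two
  · rw [← taylorCoeff_one, taylorCoeff_even_part (hd.analyticAt hB).contDiffAt]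
    norm_num

theorem two_mul_taylorCoeff_three_sub_sq {𝕜 : Type*} [NontriviallyNormedField 𝕜]
    [CompleteSpace 𝕜] [CharZero 𝕜] {f p : 𝕜 → 𝕜} (hf : AnalyticAt 𝕜 f 0)
    (hp : AnalyticAt 𝕜 p 0) (h0 : f 0 = 0) (h1 : deriv f 0 = 1) (hp0 : p 0 = 1)
    (hfp : (fun z => z * deriv f z) =ᶠ[nhds 0] p * f) :
    2 * taylorCoeff f 3 - taylorCoeff f 2 ^ 2 = taylorCoeff p 2 := by
  have hcoeff (n : ℕ) : (n + 1 : 𝕜) * taylorCoeff f (n + 1) =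
      ∑ i ∈ range (n + 2), taylorCoeff p i * taylorCoeff f (n + 1 - i) := by
    rw [← taylorCoeff_deriv, ← taylorCoeff_id_mul hf.deriv.contDiffAt, hfp.taylorCoeff_eq,
      taylorCoeff_mul hp.contDiffAt hf.contDiffAt]
  have h2 := hcoeff 1
  have h3 := hcoeff 2
  simp only [Nat.cast_one, Nat.reduceAdd, sum_range_succ, range_one, sum_singleton,
    taylorCoeff_zero, hp0, tsub_zero, one_mul, taylorCoeff_one, Nat.add_one_sub_one, h1, mul_one,
    tsub_self, h0, mul_zero, add_zero, Nat.cast_ofNat, Nat.reduceSub] at h2 h3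
  linear_combination h3 - taylorCoeff f 2 * h2

theorem stmt_9_general (f : ℂ → ℂ) (hf : DifferentiableOn ℂ f (ball (0:ℂ) 1))
    (h0 : f 0 = 0) (h1 : deriv f 0 = 1)
    (hfz : ∀ z ∈ ball (0:ℂ) 1, z ≠ 0 → f z ≠ 0)
    (a : ℕ → ℂ) (ha : ∀ n, a n = iteratedDeriv n f 0 / (Nat.factorial n))
    (hstar : ∀ z ∈ ball (0:ℂ) 1, z ≠ 0 → 0 ≤ (f z / (z * deriv f z)).re) :
    ‖2 * a 3 - a 2 ^ 2‖ ≤ 2 := by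
  have hB : ball (0 : ℂ) 1 ∈ nhds 0 := ball_mem_nhds 0 one_pos
  set g := dslope f 0
  have hfg (z : ℂ) : f z = z * g z := by simpa [h0] using (sub_smul_dslope f 0 z).symm
  have hg : ∀ z ∈ ball 0 1, g z ≠ 0 := fun z hz => by
    rcases eq_or_ne z 0 with rfl | hz0
    · simp [g, h1]
    · exact right_ne_zero_of_mul (hfg z ▸ hfz z hz hz0)
  set p := fun z => deriv f z / g z
  have hpd : DifferentiableOn ℂ p (ball 0 1) :=
    (hf.deriv isOpen_ball).div ((differentiableOn_dslope hB).mpr hf) hg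
  have hp0 : p 0 = 1 := by simp [p, g, h1]
  have hre : ∀ z ∈ ball 0 1, 0 ≤ (p z).re := fun z hz => by
    rcases eq_or_ne z 0 with rfl | hz0
    · simp [hp0]
    · rw [show p z = (f z / (z * deriv f z))⁻¹ by rw [inv_div, hfg z, mul_div_mul_left _ _ hz0],
        inv_re]
      exact div_nonneg (hstar z hz hz0) (normSq_nonneg _)
  have hfp : (fun z => z * deriv f z) =ᶠ[nhds 0] p * f := by
    filter_upwards [hB] with z hz
    simp only [Pi.mul_apply, p, hfg z]
    field_simp [hg z hz]
  have ha' (n : ℕ) : a n = taylorCoeff f n := ha n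
  rw [ha', ha', two_mul_taylorCoeff_three_sub_sq (hf.analyticAt hB) (hpd.analyticAt hB) h0 h1 hp0
    hfp]
  exact norm_taylorCoeff_two_le_two_of_re_nonneg hpd hp0 hre

theorem stmt_9 (f : ℂ → ℂ) (hf : DifferentiableOn ℂ f (ball (0:ℂ) 1))
    (h0 : f 0 = 0) (h1 : deriv f 0 = 1)
    (hf' : ∀ z ∈ ball (0:ℂ) 1, deriv f z ≠ 0)
    (hfz : ∀ z ∈ ball (0:ℂ) 1, z ≠ 0 → f z ≠ 0)
    (a : ℕ → ℂ) (ha : ∀ n, a n = iteratedDeriv n f 0 / (Nat.factorial n))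
    (hstar : ∀ z ∈ ball (0:ℂ) 1, z ≠ 0 → 0 ≤ (f z / (z * deriv f z)).re) :
    ‖2 * a 3 - a 2 ^ 2‖ ≤ 2 :=
  stmt_9_general f hf h0 h1 hfz a ha hstar
end

section
/- Let 0 ≤ α ≤ 1/2 and let f(z) = z + a_2 z² + a_3 z³ + ⋯ be holomorphic on D with f' nonvanishing, f(z) ≠ 0 for z ≠ 0, and Re(f(z)/(z f'(z))) ≥ α on D ∖ {0} (f almost starlike of order α). Then |a_3| ≤ (1-α)(3-4α). -/
/-!
The function `p = f / (z f')`, extended by `p 0 = 1`, is holomorphic on the disc with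
`Re p ≥ α`, so `ω = (p - 1) / (p + 1 - 2α)` is a Schwarz function. Writing `g = f / z`, the
identity `ω (g + (1 - 2α) f') = g - f'` compared at orders one and two gives
`a₃ = (1 - α)(3 - 4α) ω'(0)² - (1 - α) ω''(0) / 2`. By the Schwarz lemma `|ω'(0)| ≤ 1`, and
Schwarz–Pick at the origin applied to `ω / z` gives `|ω''(0)| ≤ 2 (1 - |ω'(0)|²)`; for
`α ≤ 1/2` these combine to the bound.
-/

open Complex ComplexConjugate Metric Set Filter Topology

section Coefficients

variable {𝕜 : Type*} [NontriviallyNormedField 𝕜]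

theorem AnalyticAt.dslope_self {f : 𝕜 → 𝕜} {a : 𝕜} (hf : AnalyticAt 𝕜 f a) :
    AnalyticAt 𝕜 (dslope f a) a :=
  let ⟨_, hp⟩ := hf
  hp.has_fpower_series_dslope_fslope.analyticAt

variable [CompleteSpace 𝕜]

theorem iteratedDeriv_succ_eq_mul_iteratedDeriv_dslope {f : 𝕜 → 𝕜} (hf : AnalyticAt 𝕜 f 0)
    (h0 : f 0 = 0) (n : ℕ) :
    iteratedDeriv (n + 1) f 0 = (n + 1) * iteratedDeriv n (dslope f 0) 0 := by
  have hf_eq : f = fun z => z * dslope f 0 z := by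
    funext z
    simpa using (sub_smul_dslope_of_zero h0 z).symm
  conv_lhs => rw [hf_eq]
  rw [iteratedDeriv_fun_mul (f := fun z => z) contDiffAt_id hf.dslope_self.contDiffAt,
    Finset.sum_eq_single 1]
  · simp [iteratedDeriv_fun_id_zero]
  · intro i _ hi
    simp [iteratedDeriv_fun_id_zero, hi]
  · simp

theorem iteratedDeriv_three_eq_of_mul_eq [CharZero 𝕜] {f ω : 𝕜 → 𝕜} {κ : 𝕜}
    (hf : AnalyticAt 𝕜 f 0) (hω : AnalyticAt 𝕜 ω 0) (h0 : f 0 = 0) (h1 : deriv f 0 = 1)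
    (hω0 : ω 0 = 0)
    (hid : (fun z => ω z * (dslope f 0 z + κ * deriv f z)) =ᶠ[𝓝 0]
      fun z => dslope f 0 z - deriv f z) :
    iteratedDeriv 3 f 0 / 6 =
      (1 + κ) * (1 + 2 * κ) / 2 * deriv ω 0 ^ 2 - (1 + κ) / 4 * iteratedDeriv 2 ω 0 := by
  have hg := hf.dslope_self
  have hfg := iteratedDeriv_succ_eq_mul_iteratedDeriv_dslope hf h0
  have hf' (n : ℕ) :
      iteratedDeriv n (deriv f) 0 = (n + 1) * iteratedDeriv n (dslope f 0) 0 := by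
    rw [← iteratedDeriv_succ', hfg]
  have hden (n : ℕ) : iteratedDeriv n (fun z => dslope f 0 z + κ * deriv f z) 0
      = (1 + (n + 1) * κ) * iteratedDeriv n (dslope f 0) 0 := by
    rw [iteratedDeriv_fun_add hg.contDiffAt (contDiffAt_const.mul hf.deriv.contDiffAt),
      iteratedDeriv_const_mul_field, hf']
    ring
  have hleibniz (n : ℕ) : ∑ i ∈ Finset.range (n + 1), n.choose i * iteratedDeriv i ω 0 *
      ((1 + (((n - i : ℕ) : 𝕜) + 1) * κ) * iteratedDeriv (n - i) (dslope f 0) 0)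
      = -n * iteratedDeriv n (dslope f 0) 0 := by
    simp_rw [← hden]
    rw [← iteratedDeriv_fun_mul hω.contDiffAt
      (hg.contDiffAt.add (contDiffAt_const.mul hf.deriv.contDiffAt)), hid.iteratedDeriv_eq n,
      iteratedDeriv_fun_sub hg.contDiffAt hf.deriv.contDiffAt, hf']
    ring
  have e1 := hleibniz 1
  have e2 := hleibniz 2
  simp only [Finset.sum_range_succ, Finset.range_one, Finset.sum_singleton, Nat.choose_self,
    Nat.choose_zero_right, Nat.choose_succ_self_right, Nat.reduceAdd, Nat.add_one_sub_one,
    tsub_zero, tsub_self, Nat.cast_one, Nat.cast_ofNat, CharP.cast_eq_zero, iteratedDeriv_zero,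
    iteratedDeriv_one, dslope_same, h1, hω0, zero_add, mul_zero, zero_mul, one_mul, mul_one,
    neg_mul] at e1 e2
  rw [hfg 2]
  push_cast
  linear_combination (1 / 4 : 𝕜) * e2 - (1 + 2 * κ) / 2 * deriv ω 0 * e1

end Coefficients

section SchwarzPick

theorem norm_sub_le_norm_one_sub_conj_mul {b w : ℂ} (hb : ‖b‖ ≤ 1) (hw : ‖w‖ ≤ 1) :
    ‖w - b‖ ≤ ‖1 - conj b * w‖ := by
  have key : ‖1 - conj b * w‖ ^ 2 - ‖w - b‖ ^ 2 = (1 - ‖b‖ ^ 2) * (1 - ‖w‖ ^ 2) := by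
    simp only [← normSq_eq_norm_sq, normSq_apply, sub_re, sub_im, mul_re, mul_im, one_re,
      one_im, conj_re, conj_im]
    ring
  have : 0 ≤ (1 - ‖b‖ ^ 2) * (1 - ‖w‖ ^ 2) :=
    mul_nonneg (by nlinarith [norm_nonneg b]) (by nlinarith [norm_nonneg w])
  exact (pow_le_pow_iff_left₀ (norm_nonneg _) (norm_nonneg _) two_ne_zero).1 (by linarith)

variable {G : ℂ → ℂ}

theorem norm_deriv_le_one_sub_sq_of_norm_lt_one (hd : DifferentiableOn ℂ G (ball 0 1))
    (h_maps : MapsTo G (ball 0 1) (closedBall 0 1)) (hG0 : ‖G 0‖ < 1) :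
    ‖deriv G 0‖ ≤ 1 - ‖G 0‖ ^ 2 := by
  set b := G 0
  have hG : ∀ z ∈ ball (0 : ℂ) 1, ‖G z‖ ≤ 1 := fun z hz => by simpa using h_maps hz
  have hden : ∀ z ∈ ball (0 : ℂ) 1, 1 - conj b * G z ≠ 0 := fun z hz => by
    have : ‖conj b * G z‖ < 1 := by
      rw [norm_mul, RCLike.norm_conj]
      nlinarith [hG z hz, norm_nonneg b, norm_nonneg (G z)]
    intro h
    rw [← sub_eq_zero.1 h, norm_one] at this
    exact this.false
  -- the Schwarz lemma for `G` followed by the disc automorphism sending `b` to `0`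
  set h : ℂ → ℂ := fun z => (G z - b) / (1 - conj b * G z)
  have hh : ‖deriv h 0‖ ≤ 1 := by
    refine Complex.norm_deriv_le_one_of_mapsTo_ball
      ((hd.sub_const b).div ((hd.const_mul (conj b)).const_sub 1) hden) (fun z hz => ?_) one_pos
    rw [show h 0 = 0 by simp [h, b], mem_closedBall_zero_iff, norm_div,
      div_le_one (norm_pos_iff.2 (hden z hz))]
    exact norm_sub_le_norm_one_sub_conj_mul hG0.le (hG z hz)
  have hpos : 0 < 1 - ‖b‖ ^ 2 := by nlinarith [norm_nonneg b]
  have hderiv : deriv h 0 * (1 - ‖b‖ ^ 2 : ℝ) = deriv G 0 := by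
    have hG' := (hd.differentiableAt (ball_mem_nhds 0 one_pos)).hasDerivAt
    rw [((hG'.sub_const b).fun_div ((hG'.const_mul (conj b)).const_sub 1)
      (hden 0 (mem_ball_self one_pos))).deriv]
    have hb : (1 : ℂ) - conj b * b = ((1 - ‖b‖ ^ 2 : ℝ) : ℂ) := by
      rw [mul_comm, mul_conj, normSq_eq_norm_sq]
      push_cast
      ring
    have : ((1 - ‖b‖ ^ 2 : ℝ) : ℂ) ≠ 0 := by exact_mod_cast hpos.ne'
    rw [hb]
    field_simp
    simp [b]
  rw [← hderiv, norm_mul, norm_real, Real.norm_of_nonneg hpos.le]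
  nlinarith [norm_nonneg (deriv h 0)]

theorem norm_deriv_le_one_sub_sq_of_mapsTo_closedBall (hd : DifferentiableOn ℂ G (ball 0 1))
    (h_maps : MapsTo G (ball 0 1) (closedBall 0 1)) :
    ‖deriv G 0‖ ≤ 1 - ‖G 0‖ ^ 2 := by
  have hball : ball (0 : ℂ) 1 ∈ 𝓝 0 := ball_mem_nhds 0 one_pos
  have hG : ∀ z ∈ ball (0 : ℂ) 1, ‖G z‖ ≤ 1 := fun z hz => by simpa using h_maps hz
  rcases (hG 0 (mem_ball_self one_pos)).lt_or_eq with hlt | heq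
  · exact norm_deriv_le_one_sub_sq_of_norm_lt_one hd h_maps hlt
  · have hmax : IsLocalMax (norm ∘ G) 0 := by
      filter_upwards [hball] with z hz
      exact (hG z hz).trans heq.ge
    have hconst := Complex.eventually_eq_of_isLocalMax_norm
      (eventually_of_mem hball fun z hz => hd.differentiableAt (isOpen_ball.mem_nhds hz)) hmax
    rw [EventuallyEq.deriv_eq (f := fun _ => G 0) hconst, deriv_const, heq]
    norm_num

theorem norm_iteratedDeriv_two_le_of_mapsTo_closedBall (hd : DifferentiableOn ℂ G (ball 0 1))
    (h_maps : MapsTo G (ball 0 1) (closedBall 0 1)) (h0 : G 0 = 0) :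
    ‖iteratedDeriv 2 G 0‖ ≤ 2 * (1 - ‖deriv G 0‖ ^ 2) := by
  have hball : ball (0 : ℂ) 1 ∈ 𝓝 0 := ball_mem_nhds 0 one_pos
  have hslope_maps : MapsTo (dslope G 0) (ball 0 1) (closedBall 0 1) := fun z hz => by
    simpa using Complex.norm_dslope_le_div_of_mapsTo_ball hd (by rwa [h0]) hz
  have hslope := norm_deriv_le_one_sub_sq_of_mapsTo_closedBall
    ((Complex.differentiableOn_dslope hball).2 hd) hslope_maps
  rw [dslope_same] at hslope
  rw [iteratedDeriv_succ_eq_mul_iteratedDeriv_dslope (hd.analyticAt hball) h0 1,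
    iteratedDeriv_one, norm_mul]
  norm_num
  exact hslope

end SchwarzPick

section AlmostStarlike

variable {α : ℝ}

theorem norm_sub_one_le_norm_add_of_le_re {w : ℂ} (hα : α ≤ 1) (hw : α ≤ w.re) :
    ‖w - 1‖ ≤ ‖w + (1 - 2 * α)‖ := by
  rw [← sq_le_sq₀ (norm_nonneg _) (norm_nonneg _), ← normSq_eq_norm_sq, ← normSq_eq_norm_sq]
  simp only [normSq_apply, sub_re, sub_im, add_re, add_im, one_re, one_im, mul_re, mul_im,
    ofReal_re, ofReal_im, re_ofNat, im_ofNat]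
  nlinarith

theorem add_ne_zero_of_le_re {w : ℂ} (hα : α < 1) (hw : α ≤ w.re) :
    w + (1 - 2 * α) ≠ 0 := by
  refine ne_of_apply_ne re (ne_of_gt ?_)
  simp only [add_re, sub_re, one_re, mul_re, ofReal_re, ofReal_im, re_ofNat, im_ofNat, zero_re]
  linarith

theorem exists_schwarz_function {f : ℂ → ℂ} (hα : α < 1)
    (hf : DifferentiableOn ℂ f (ball 0 1)) (h0 : f 0 = 0)
    (hf' : ∀ z ∈ ball (0 : ℂ) 1, deriv f z ≠ 0)
    (hre : ∀ z ∈ ball (0 : ℂ) 1, z ≠ 0 → α ≤ (f z / (z * deriv f z)).re) :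
    ∃ ω : ℂ → ℂ, DifferentiableOn ℂ ω (ball 0 1) ∧ MapsTo ω (ball 0 1) (closedBall 0 1) ∧
      ω 0 = 0 ∧ ∀ z ∈ ball (0 : ℂ) 1,
        ω z * (dslope f 0 z + (1 - 2 * α) * deriv f z) = dslope f 0 z - deriv f z := by
  have hg : DifferentiableOn ℂ (dslope f 0) (ball 0 1) :=
    (Complex.differentiableOn_dslope (ball_mem_nhds 0 one_pos)).2 hf
  have hp : ∀ z ∈ ball (0 : ℂ) 1, α ≤ (dslope f 0 z / deriv f z).re := by
    intro z hz
    rcases eq_or_ne z 0 with rfl | hz0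
    · rw [dslope_same, div_self (hf' 0 hz), one_re]
      exact hα.le
    · rw [dslope_of_ne _ hz0, slope_def_field, h0, sub_zero, sub_zero, div_div]
      exact hre z hz hz0
  have hden : ∀ z ∈ ball (0 : ℂ) 1, dslope f 0 z + (1 - 2 * α) * deriv f z ≠ 0 := by
    intro z hz
    have := mul_ne_zero (add_ne_zero_of_le_re hα (hp z hz)) (hf' z hz)
    rwa [add_mul, div_mul_cancel₀ _ (hf' z hz)] at this
  refine ⟨fun z => (dslope f 0 z - deriv f z) / (dslope f 0 z + (1 - 2 * α) * deriv f z),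
    (hg.sub (hf.deriv isOpen_ball)).div (hg.add ((hf.deriv isOpen_ball).const_mul _)) hden,
    fun z hz => ?_, by simp [dslope_same], fun z hz => div_mul_cancel₀ _ (hden z hz)⟩
  have hnum_eq : dslope f 0 z - deriv f z = (dslope f 0 z / deriv f z - 1) * deriv f z := by
    field_simp [hf' z hz]
  have hden_eq : dslope f 0 z + (1 - 2 * α) * deriv f z
      = (dslope f 0 z / deriv f z + (1 - 2 * α)) * deriv f z := by
    field_simp [hf' z hz]
  rw [mem_closedBall_zero_iff]
  dsimp only
  rw [hnum_eq, hden_eq, mul_div_mul_right _ _ (hf' z hz), norm_div,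
    div_le_one (norm_pos_iff.2 (add_ne_zero_of_le_re hα (hp z hz)))]
  exact norm_sub_one_le_norm_add_of_le_re hα.le (hp z hz)

theorem norm_mul_sq_sub_mul_le (hα : α ≤ 1 / 2) {c₁ c₂ : ℂ} (h₁ : ‖c₁‖ ≤ 1)
    (h₂ : ‖c₂‖ ≤ 2 * (1 - ‖c₁‖ ^ 2)) :
    ‖(((1 - α) * (3 - 4 * α) : ℝ) : ℂ) * c₁ ^ 2 - (((1 - α) / 2 : ℝ) : ℂ) * c₂‖ ≤
      (1 - α) * (3 - 4 * α) := by
  have hc : ‖c₁‖ ^ 2 ≤ 1 := pow_le_one₀ (norm_nonneg _) h₁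
  calc _ ≤ (1 - α) * (3 - 4 * α) * ‖c₁‖ ^ 2 + (1 - α) / 2 * ‖c₂‖ := by
        refine (norm_sub_le _ _).trans_eq ?_
        rw [norm_mul, norm_mul, norm_pow, norm_real, norm_real,
          Real.norm_of_nonneg (by nlinarith), Real.norm_of_nonneg (by linarith)]
    _ ≤ (1 - α) * (3 - 4 * α) := by
        nlinarith [mul_le_mul_of_nonneg_left h₂ (by linarith : (0 : ℝ) ≤ (1 - α) / 2),
          mul_le_mul_of_nonneg_left hc (by nlinarith : (0 : ℝ) ≤ (1 - α) * (2 - 4 * α))]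

end AlmostStarlike

theorem stmt_16_general (α : ℝ) (hα1 : α ≤ 1/2)
    (f : ℂ → ℂ) (hf : DifferentiableOn ℂ f (ball (0:ℂ) 1))
    (h0 : f 0 = 0) (h1 : deriv f 0 = 1)
    (hf' : ∀ z ∈ ball (0:ℂ) 1, deriv f z ≠ 0)
    (a : ℕ → ℂ) (ha : ∀ n, a n = iteratedDeriv n f 0 / (Nat.factorial n))
    (hstar : ∀ z ∈ ball (0:ℂ) 1, z ≠ 0 → α ≤ (f z / (z * deriv f z)).re) :
    ‖a 3‖ ≤ (1 - α) * (3 - 4 * α) := by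
  have hball : ball (0 : ℂ) 1 ∈ 𝓝 0 := ball_mem_nhds 0 one_pos
  obtain ⟨ω, hωd, hω_maps, hω0, hid⟩ := exists_schwarz_function (by linarith) hf h0 hf' hstar
  have ha3 : a 3 = (((1 - α) * (3 - 4 * α) : ℝ) : ℂ) * deriv ω 0 ^ 2 -
      (((1 - α) / 2 : ℝ) : ℂ) * iteratedDeriv 2 ω 0 := by
    rw [ha, show ((Nat.factorial 3 : ℕ) : ℂ) = 6 by norm_num [Nat.factorial],
      iteratedDeriv_three_eq_of_mul_eq (hf.analyticAt hball) (hωd.analyticAt hball) h0 h1 hω0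
        (eventually_of_mem hball hid)]
    push_cast
    ring
  rw [ha3]
  exact norm_mul_sq_sub_mul_le hα1
    (Complex.norm_deriv_le_one_of_mapsTo_ball hωd (by rwa [hω0]) one_pos)
    (norm_iteratedDeriv_two_le_of_mapsTo_closedBall hωd hω_maps hω0)

theorem stmt_16 (α : ℝ) (hα0 : 0 ≤ α) (hα1 : α ≤ 1/2)
    (f : ℂ → ℂ) (hf : DifferentiableOn ℂ f (ball (0:ℂ) 1))
    (h0 : f 0 = 0) (h1 : deriv f 0 = 1)
    (hf' : ∀ z ∈ ball (0:ℂ) 1, deriv f z ≠ 0)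
    (hfz : ∀ z ∈ ball (0:ℂ) 1, z ≠ 0 → f z ≠ 0)
    (a : ℕ → ℂ) (ha : ∀ n, a n = iteratedDeriv n f 0 / (Nat.factorial n))
    (hstar : ∀ z ∈ ball (0:ℂ) 1, z ≠ 0 → α ≤ (f z / (z * deriv f z)).re) :
    ‖a 3‖ ≤ (1 - α) * (3 - 4 * α) :=
  stmt_16_general α hα1 f hf h0 h1 hf' a ha hstar
end
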